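/- Let $\mathbf{c}$ be a moment vector with two representations $\mathbf{c} = \sum_{i=1}^p \lambda_i' \mathbf{u}(t_i') = \sum_{i=1}^q \lambda_i'' \mathbf{u}(t_i'')$ over a Chebyshev set $\{u_j\}_{j=0}^n$, both with positive weights and each of index at most $(n+2)/2$ (endpoints of $[a,b]$ counting one half). If the two point sets are not identical, then their points in the open interval $(a,b)$ strictly interlace: between any two consecutive interior points of one representation lies exactly one point of the other. -/

import Mathlib

/-!
Let `ν = λ' - λ''` be the difference of the two weight functions on the union `S` of the two
point sets. It is a nonzero annihilator of `u_0, …, u_n`, so `S` has at least `n + 2` points,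
while the index bounds leave room for at most `n + 3`. All Chebyshev determinants of increasing
points have one sign (the increasing tuples form a connected set), so an annihilator on `n + 2`
points, being a multiple of the cofactor vector, strictly alternates in sign. On `n + 3` points
the annihilators form the pencil `α W₁ + β W₂` of the two shifted cofactor vectors, and they
alternate as soon as `(-1)^n ν(a) ν(b) > 0`. This endpoint condition is exactly what the index
bounds give when they are tight, which happens when `#S = n + 3` and also when the two sets share
an interior point; in the latter case `#S = n + 2`, and the condition contradicts alternation.
So `ν` alternates along `S`, it is positive at the interior points of the first set and negative
at those of the second, and this is the interlacing.
-/

open Finset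

def IsSignAlternating {m : ℕ} (ν : Fin m → ℝ) : Prop :=
  ∃ σ : ℝ, ∀ i : Fin m, 0 < σ * ((-1) ^ (i : ℕ) * ν i)

namespace IsSignAlternating

variable {m : ℕ} {ν : Fin m → ℝ}

theorem neg (h : IsSignAlternating ν) : IsSignAlternating (-ν) := by
  obtain ⟨σ, hσ⟩ := h
  exact ⟨-σ, fun i => by simpa using hσ i⟩

theorem mul_pos (h : IsSignAlternating ν) (i j : Fin m) :
    0 < (-1) ^ ((i : ℕ) + j) * (ν i * ν j) := by
  obtain ⟨σ, hσ⟩ := h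
  refine pos_of_mul_pos_right (a := σ ^ 2) ?_ (sq_nonneg σ)
  calc 0 < σ * ((-1) ^ (i : ℕ) * ν i) * (σ * ((-1) ^ (j : ℕ) * ν j)) := _root_.mul_pos (hσ i) (hσ j)
    _ = _ := by ring

theorem mul_neg_of_val_eq_succ (h : IsSignAlternating ν) {i j : Fin m}
    (hij : (j : ℕ) = i + 1) : ν i * ν j < 0 := by
  have := h.mul_pos i j
  rw [hij, ← add_assoc, pow_succ, ← two_mul, pow_mul] at this
  simpa using this

theorem existsUnique_between (h : IsSignAlternating ν) {i j : Fin m} (hij : i < j)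
    (hi : 0 < ν i) (hj : 0 < ν j) (hbetween : ∀ k, i < k → k < j → ν k < 0) :
    ∃! k, i < k ∧ k < j := by
  have hsucc : (i : ℕ) + 1 < j := by
    by_contra! hle
    have := h.mul_neg_of_val_eq_succ (i := i) (j := j) (by omega)
    nlinarith
  set k : Fin m := ⟨i + 1, by omega⟩
  have hk : i < k ∧ k < j := ⟨Fin.lt_def.2 (by simp [k]), Fin.lt_def.2 hsucc⟩
  have hj2 : (j : ℕ) = i + 2 := by
    by_contra! hne
    set k' : Fin m := ⟨i + 2, by omega⟩
    have := h.mul_neg_of_val_eq_succ (i := k) (j := k') rfl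
    nlinarith [hbetween k hk.1 hk.2,
      hbetween k' (Fin.lt_def.2 (by simp [k'])) (Fin.lt_def.2 (by simp [k']; omega))]
  refine ⟨k, hk, fun k' hk' => Fin.ext ?_⟩
  have := Fin.lt_def.1 hk'.1
  have := Fin.lt_def.1 hk'.2
  simp only [k]
  omega

end IsSignAlternating

section ChebyshevDeterminants

variable {n : ℕ} {u : Fin (n + 1) → ℝ → ℝ} {I : Set ℝ}

def IsChebyshevOn (u : Fin (n + 1) → ℝ → ℝ) (I : Set ℝ) : Prop :=
  ∀ c : Fin (n + 1) → ℝ, c ≠ 0 → ∀ t : Fin (n + 1) → ℝ, StrictMono t → (∀ i, t i ∈ I) →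
    ¬ (∀ i, ∑ j, c j * u j (t i) = 0)

def chebyshevMatrix (u : Fin (n + 1) → ℝ → ℝ) (x : Fin (n + 1) → ℝ) :
    Matrix (Fin (n + 1)) (Fin (n + 1)) ℝ :=
  Matrix.of fun i j => u j (x i)

def chebyshevCofactor (u : Fin (n + 1) → ℝ → ℝ) (s : Fin (n + 2) → ℝ) : Fin (n + 2) → ℝ :=
  fun l => (-1) ^ (l : ℕ) * (chebyshevMatrix u (s ∘ l.succAbove)).det

theorem sum_chebyshevCofactor_mul (s : Fin (n + 2) → ℝ) (j : Fin (n + 1)) :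
    ∑ l, chebyshevCofactor u s l * u j (s l) = 0 := by
  -- Laplace expansion along the first row of a matrix whose first two rows coincide
  set A : Matrix (Fin (n + 2)) (Fin (n + 2)) ℝ :=
    Matrix.of fun k l => Fin.cases (u j (s l)) (fun r => u r (s l)) k
  have hdet : A.det = 0 := Matrix.det_zero_of_row_eq (Fin.succ_ne_zero j).symm (by ext; simp [A])
  have hminor (l : Fin (n + 2)) :
      (A.submatrix Fin.succ l.succAbove).det = (chebyshevMatrix u (s ∘ l.succAbove)).det := by
    rw [← Matrix.det_transpose]; rfl
  rw [Matrix.det_succ_row_zero, Finset.sum_congr rfl fun l _ => by rw [hminor l]] at hdet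
  rw [← hdet]
  refine Finset.sum_congr rfl fun l _ => ?_
  simp only [chebyshevCofactor, A, Matrix.of_apply, Fin.cases_zero]
  ring

theorem convex_setOf_strictMono (hI : Convex ℝ I) :
    Convex ℝ {x : Fin (n + 1) → ℝ | StrictMono x ∧ ∀ i, x i ∈ I} := by
  rintro x ⟨hx, hxI⟩ y ⟨hy, hyI⟩ s t hs ht hst
  refine ⟨fun i j hij => ?_, fun i => hI (hxI i) (hyI i) hs ht hst⟩
  have := hx hij
  have := hy hij
  simp only [Pi.add_apply, Pi.smul_apply, smul_eq_mul]
  rcases hs.eq_or_lt with rfl | hs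
  · nlinarith
  · nlinarith

namespace IsChebyshevOn

theorem det_ne_zero (hu : IsChebyshevOn u I) {x : Fin (n + 1) → ℝ} (hx : StrictMono x)
    (hxI : ∀ i, x i ∈ I) : (chebyshevMatrix u x).det ≠ 0 := by
  intro h
  obtain ⟨c, hc0, hc⟩ := Matrix.exists_mulVec_eq_zero_iff.2 h
  refine hu c hc0 x hx hxI fun i => ?_
  simpa [Matrix.mulVec, dotProduct, chebyshevMatrix, mul_comm] using congrFun hc i

theorem eq_zero_of_sum_mul_eq_zero (hu : IsChebyshevOn u I) {x : Fin (n + 1) → ℝ}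
    (hx : StrictMono x) (hxI : ∀ i, x i ∈ I) {c : Fin (n + 1) → ℝ}
    (hc : ∀ j, ∑ i, c i * u j (x i) = 0) : c = 0 := by
  refine Matrix.eq_zero_of_vecMul_eq_zero (hu.det_ne_zero hx hxI) (funext fun j => ?_)
  simpa [Matrix.vecMul, dotProduct, chebyshevMatrix] using hc j

theorem det_mul_det_pos (hu : IsChebyshevOn u I) (hI : Convex ℝ I)
    (hcont : ∀ j, ContinuousOn (u j) I) {x y : Fin (n + 1) → ℝ}
    (hx : StrictMono x) (hxI : ∀ i, x i ∈ I) (hy : StrictMono y) (hyI : ∀ i, y i ∈ I) :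
    0 < (chebyshevMatrix u x).det * (chebyshevMatrix u y).det := by
  set K := {x : Fin (n + 1) → ℝ | StrictMono x ∧ ∀ i, x i ∈ I}
  set f := fun x => (chebyshevMatrix u x).det
  have hf : ContinuousOn f K := by
    refine (continuous_id.matrix_det).comp_continuousOn
      (continuousOn_pi.2 fun i => continuousOn_pi.2 fun j => ?_)
    exact (hcont j).comp (continuous_apply i).continuousOn fun z hz => hz.2 i
  have hconn := ((convex_setOf_strictMono hI).isPreconnected.image f hf).ordConnected
  by_contra! hle
  obtain ⟨z, ⟨hz, hzI⟩, hz0⟩ := hconn.uIcc_subset (Set.mem_image_of_mem f ⟨hx, hxI⟩)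
    (Set.mem_image_of_mem f ⟨hy, hyI⟩) (by
      rcases mul_nonpos_iff.1 hle with h | h
      exacts [Set.mem_uIcc.2 (Or.inr ⟨h.2, h.1⟩), Set.mem_uIcc.2 (Or.inl h)])
  exact hu.det_ne_zero hz hzI hz0

theorem chebyshevCofactor_mul_det_pos (hu : IsChebyshevOn u I) (hI : Convex ℝ I)
    (hcont : ∀ j, ContinuousOn (u j) I) {s : Fin (n + 2) → ℝ} (hs : StrictMono s)
    (hsI : ∀ i, s i ∈ I) {x : Fin (n + 1) → ℝ} (hx : StrictMono x) (hxI : ∀ i, x i ∈ I)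
    (l : Fin (n + 2)) :
    0 < (-1) ^ (l : ℕ) * chebyshevCofactor u s l * (chebyshevMatrix u x).det := by
  have h := hu.det_mul_det_pos hI hcont (hs.comp (Fin.strictMono_succAbove l))
    (fun i => hsI _) hx hxI
  have hsq : ((-1 : ℝ) ^ (l : ℕ)) ^ 2 = 1 := by rw [← pow_mul, mul_comm, pow_mul]; simp
  calc (0 : ℝ) < ((-1) ^ (l : ℕ)) ^ 2 * ((chebyshevMatrix u (s ∘ l.succAbove)).det *
        (chebyshevMatrix u x).det) := by rw [hsq, one_mul]; exact h
    _ = _ := by simp only [chebyshevCofactor]; ring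

theorem eq_zero_of_sum_mul_eq_zero_of_apply_zero (hu : IsChebyshevOn u I)
    {s : Fin (n + 2) → ℝ} (hs : StrictMono s) (hsI : ∀ i, s i ∈ I) {ν : Fin (n + 2) → ℝ}
    (hν : ∀ j, ∑ i, ν i * u j (s i) = 0) (hν0 : ν 0 = 0) : ν = 0 := by
  have htail := hu.eq_zero_of_sum_mul_eq_zero (hs.comp Fin.strictMono_succ) (fun i => hsI _)
    (c := ν ∘ Fin.succ) fun j => by simpa [Fin.sum_univ_succ, hν0] using hν j
  ext l
  induction l using Fin.cases with
  | zero => exact hν0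
  | succ i => exact congrFun htail i

theorem eq_smul_chebyshevCofactor (hu : IsChebyshevOn u I) {s : Fin (n + 2) → ℝ}
    (hs : StrictMono s) (hsI : ∀ i, s i ∈ I) {ν : Fin (n + 2) → ℝ}
    (hν : ∀ j, ∑ i, ν i * u j (s i) = 0) : ∃ c : ℝ, ν = c • chebyshevCofactor u s := by
  have hw0 : chebyshevCofactor u s 0 ≠ 0 := by
    simpa [chebyshevCofactor] using
      hu.det_ne_zero (hs.comp (Fin.strictMono_succAbove 0)) (fun i => hsI _)
  refine ⟨ν 0 / chebyshevCofactor u s 0, sub_eq_zero.1 ?_⟩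
  refine hu.eq_zero_of_sum_mul_eq_zero_of_apply_zero hs hsI (fun j => ?_) (by simp [hw0])
  simp only [Pi.sub_apply, Pi.smul_apply, smul_eq_mul, sub_mul, Finset.sum_sub_distrib,
    mul_assoc, ← Finset.mul_sum, hν j, sum_chebyshevCofactor_mul, mul_zero, sub_zero]

theorem isSignAlternating_of_ne_zero (hu : IsChebyshevOn u I) (hI : Convex ℝ I)
    (hcont : ∀ j, ContinuousOn (u j) I) {s : Fin (n + 2) → ℝ} (hs : StrictMono s)
    (hsI : ∀ i, s i ∈ I) {ν : Fin (n + 2) → ℝ} (hν : ∀ j, ∑ i, ν i * u j (s i) = 0)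
    (hν0 : ν ≠ 0) : IsSignAlternating ν := by
  obtain ⟨c, rfl⟩ := hu.eq_smul_chebyshevCofactor hs hsI hν
  have hc : c ≠ 0 := by rintro rfl; exact hν0 (zero_smul _ _)
  set x := s ∘ Fin.succAbove 0
  have hx : StrictMono x := hs.comp (Fin.strictMono_succAbove 0)
  refine ⟨c * (chebyshevMatrix u x).det, fun l => ?_⟩
  have := hu.chebyshevCofactor_mul_det_pos hI hcont hs hsI hx (fun i => hsI _) l
  calc 0 < c ^ 2 * ((-1) ^ (l : ℕ) * chebyshevCofactor u s l * (chebyshevMatrix u x).det) := by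
        positivity
    _ = _ := by simp only [Pi.smul_apply, smul_eq_mul]; ring

theorem exists_eq_smul_cons_add_smul_snoc (hu : IsChebyshevOn u I) {s : Fin (n + 3) → ℝ}
    (hs : StrictMono s) (hsI : ∀ i, s i ∈ I) {ν : Fin (n + 3) → ℝ}
    (hν : ∀ j, ∑ i, ν i * u j (s i) = 0) :
    ∃ α β : ℝ, ν = α • Fin.cons (0 : ℝ) (chebyshevCofactor u (s ∘ Fin.succ)) +
      β • Fin.snoc (α := fun _ => ℝ) (chebyshevCofactor u (s ∘ Fin.castSucc)) 0 := by
  set w := Fin.snoc (α := fun _ => ℝ) (chebyshevCofactor u (s ∘ Fin.castSucc)) 0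
  have hw (j) : ∑ i, w i * u j (s i) = 0 := by
    simpa [w, Fin.sum_univ_castSucc] using sum_chebyshevCofactor_mul (s ∘ Fin.castSucc) j
  have hw0 : w 0 ≠ 0 := by
    change w (Fin.castSucc 0) ≠ 0
    simpa [w, chebyshevCofactor] using hu.det_ne_zero
      ((hs.comp Fin.strictMono_castSucc).comp (Fin.strictMono_succAbove 0)) (fun i => hsI _)
  set β := ν 0 / w 0
  set μ := ν - β • w
  have hμ0 : μ 0 = 0 := by simp [μ, β, hw0]
  have hμ (j) : ∑ i, μ (Fin.succ i) * u j (s (Fin.succ i)) = 0 := by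
    have : ∑ i, μ i * u j (s i) = 0 := by
      simp only [μ, Pi.sub_apply, Pi.smul_apply, smul_eq_mul, sub_mul, Finset.sum_sub_distrib,
        mul_assoc, ← Finset.mul_sum, hν j, hw j, mul_zero, sub_zero]
    simpa [Fin.sum_univ_succ, hμ0] using this
  obtain ⟨α, hα⟩ := hu.eq_smul_chebyshevCofactor (hs.comp Fin.strictMono_succ)
    (fun i => hsI _) hμ
  refine ⟨α, β, funext fun l => ?_⟩
  have hνμ : ν l = μ l + β * w l := by simp [μ]
  induction l using Fin.cases with
  | zero => simp [hνμ, hμ0]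
  | succ i => simpa [hνμ] using congrFun hα i

theorem isSignAlternating_of_ends (hu : IsChebyshevOn u I) (hI : Convex ℝ I)
    (hcont : ∀ j, ContinuousOn (u j) I) {s : Fin (n + 3) → ℝ} (hs : StrictMono s)
    (hsI : ∀ i, s i ∈ I) {ν : Fin (n + 3) → ℝ} (hν : ∀ j, ∑ i, ν i * u j (s i) = 0)
    (hends : 0 < (-1) ^ n * (ν 0 * ν (Fin.last (n + 2)))) : IsSignAlternating ν := by
  obtain ⟨α, β, rfl⟩ := hu.exists_eq_smul_cons_add_smul_snoc hs hsI hν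
  set w₁ : Fin (n + 3) → ℝ := Fin.cons (0 : ℝ) (chebyshevCofactor u (s ∘ Fin.succ))
  set w₂ := Fin.snoc (α := fun _ => ℝ) (chebyshevCofactor u (s ∘ Fin.castSucc)) 0
  set x := (s ∘ Fin.castSucc) ∘ Fin.succAbove 0
  have hx : StrictMono x := (hs.comp Fin.strictMono_castSucc).comp (Fin.strictMono_succAbove 0)
  set D := (chebyshevMatrix u x).det
  -- `(-1)^l w₁ l` and `(-1)^l w₂ l` have opposite signs, vanishing only at `l = 0` resp. `last`;
  -- the endpoint condition forces `α β < 0`, so the two parts of `(-1)^l ν l` never cancel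
  have hw₁ (l : Fin (n + 3)) : (l ≠ 0 → (-1) ^ (l : ℕ) * w₁ l * D < 0) ∧
      (-1) ^ (l : ℕ) * w₁ l * D ≤ 0 := by
    induction l using Fin.cases with
    | zero => simp [w₁]
    | succ i =>
      have := hu.chebyshevCofactor_mul_det_pos hI hcont (hs.comp Fin.strictMono_succ)
        (fun _ => hsI _) hx (fun _ => hsI _) i
      have hneg : (-1) ^ ((Fin.succ i : Fin (n + 3)) : ℕ) * w₁ i.succ * D < 0 := by
        simp only [w₁, Fin.cons_succ, Fin.val_succ, pow_succ]
        linarith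
      exact ⟨fun _ => hneg, hneg.le⟩
  have hw₂ (l : Fin (n + 3)) : (l ≠ Fin.last _ → 0 < (-1) ^ (l : ℕ) * w₂ l * D) ∧
      0 ≤ (-1) ^ (l : ℕ) * w₂ l * D := by
    induction l using Fin.lastCases with
    | last => simp [w₂]
    | cast i =>
      have hpos := hu.chebyshevCofactor_mul_det_pos hI hcont (hs.comp Fin.strictMono_castSucc)
        (fun _ => hsI _) hx (fun _ => hsI _) i
      simp only [w₂, Fin.snoc_castSucc, Fin.val_castSucc] at hpos ⊢
      exact ⟨fun _ => hpos, hpos.le⟩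
  have hαβ : α * β < 0 := by
    have h0 := (hw₂ 0).1 Fin.last_pos.ne
    have hl := (hw₁ (Fin.last _)).1 (Fin.last_pos.ne')
    simp only [Fin.val_zero, pow_zero, one_mul, Fin.val_last] at h0 hl
    rw [pow_add, neg_one_sq, mul_one] at hl
    have hD : 0 < D ^ 2 := by positivity
    refine neg_of_mul_pos_left (b := w₂ 0 * D * ((-1) ^ n * w₁ (Fin.last _) * D)) ?_
      (mul_neg_of_pos_of_neg h0 hl).le
    have : (w₁ 0 = 0) ∧ w₂ (Fin.last _) = 0 := by simp [w₁, w₂]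
    simp only [Pi.add_apply, Pi.smul_apply, smul_eq_mul, this.1, this.2] at hends
    nlinarith [_root_.mul_pos hends hD]
  refine ⟨β * D, fun l => ?_⟩
  have hsplit : β * D * ((-1) ^ (l : ℕ) * (α • w₁ + β • w₂) l) =
      α * β * ((-1) ^ (l : ℕ) * w₁ l * D) + β ^ 2 * ((-1) ^ (l : ℕ) * w₂ l * D) := by
    simp only [Pi.add_apply, Pi.smul_apply, smul_eq_mul]; ring
  have hβ : 0 < β ^ 2 := pow_two_pos_of_ne_zero (by rintro rfl; simp at hαβ)
  rw [hsplit]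
  by_cases hl : l = 0
  · subst hl
    exact add_pos_of_nonneg_of_pos (mul_nonneg_of_nonpos_of_nonpos hαβ.le (hw₁ 0).2)
      (_root_.mul_pos hβ ((hw₂ 0).1 Fin.last_pos.ne))
  · exact add_pos_of_pos_of_nonneg (mul_pos_of_neg_of_neg hαβ ((hw₁ l).1 hl))
      (mul_nonneg hβ.le (hw₂ l).2)

end IsChebyshevOn

end ChebyshevDeterminants

section Counting

variable {α : Type*} {a b : α}

open Classical in
/-- `2 * #X - endpointCount a b X` is twice the index of `X ⊆ [a, b]`. -/
noncomputable def endpointCount (a b : α) (X : Set α) : ℕ :=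
  (if a ∈ X then 1 else 0) + (if b ∈ X then 1 else 0)

theorem endpointCount_le_two (X : Set α) : endpointCount a b X ≤ 2 := by
  unfold endpointCount; split_ifs <;> omega

theorem endpointCount_eq_two_iff {X : Set α} : endpointCount a b X = 2 ↔ a ∈ X ∧ b ∈ X := by
  unfold endpointCount; split_ifs <;> simp_all

theorem endpointCount_eq_zero_iff {X : Set α} : endpointCount a b X = 0 ↔ a ∉ X ∧ b ∉ X := by
  unfold endpointCount; split_ifs <;> simp_all

theorem endpointCount_union_add_inter (X Y : Set α) :
    endpointCount a b (X ∪ Y) + endpointCount a b (X ∩ Y) =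
      endpointCount a b X + endpointCount a b Y := by
  unfold endpointCount; split_ifs <;> simp_all

theorem endpointCount_add_card_filter_Ioo_le [LinearOrder α] (hab : a ≠ b) (C : Finset α) :
    endpointCount a b ↑C + #{x ∈ C | x ∈ Set.Ioo a b} ≤ #C := by
  have hsplit := card_filter_add_card_filter_not (s := C) (· ∈ Set.Ioo a b)
  suffices endpointCount a b ↑C ≤ #{x ∈ C | x ∉ Set.Ioo a b} by omega
  calc endpointCount a b ↑C = #(C ∩ {a, b}) := by
        unfold endpointCount
        split_ifs <;> simp_all [inter_insert_of_mem, inter_insert_of_notMem,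
          inter_singleton_of_mem, inter_singleton_of_notMem]
    _ ≤ _ := card_le_card fun x hx => by
        obtain ⟨hxC, hx⟩ := mem_inter.1 hx
        refine mem_filter.2 ⟨hxC, fun h => ?_⟩
        rcases mem_insert.1 hx with rfl | hx
        · exact lt_irrefl _ h.1
        · rw [mem_singleton.1 hx] at h; exact lt_irrefl _ h.2

variable [LinearOrder α] {n : ℕ} {A B : Finset α}

theorem card_union_add_card_filter_Ioo_le (hab : a ≠ b)
    (hA : 2 * #A ≤ n + 2 + endpointCount a b ↑A) (hB : 2 * #B ≤ n + 2 + endpointCount a b ↑B) :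
    #(A ∪ B) + #{x ∈ A ∩ B | x ∈ Set.Ioo a b} ≤ n + 3 := by
  have h₁ := card_union_add_card_inter A B
  have h₂ := endpointCount_union_add_inter (a := a) (b := b) ↑A ↑B
  have h₃ := endpointCount_add_card_filter_Ioo_le hab (A ∩ B)
  have h₄ := endpointCount_le_two (a := a) (b := b) ↑(A ∪ B)
  rw [← coe_union, ← coe_inter] at h₂
  omega

theorem endpoints_mem_and_two_mul_card_eq (hab : a ≠ b)
    (hA : 2 * #A ≤ n + 2 + endpointCount a b ↑A) (hB : 2 * #B ≤ n + 2 + endpointCount a b ↑B)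
    (hm : n + 2 ≤ #(A ∪ B)) (h : n + 3 ≤ #(A ∪ B) ∨ ∃ x ∈ A ∩ B, x ∈ Set.Ioo a b) :
    a ∈ A ∪ B ∧ b ∈ A ∪ B ∧ a ∉ A ∩ B ∧ b ∉ A ∩ B ∧ 2 * #A = n + 2 + endpointCount a b ↑A := by
  have h₁ := card_union_add_card_inter A B
  have h₂ := endpointCount_union_add_inter (a := a) (b := b) ↑A ↑B
  have h₃ := endpointCount_add_card_filter_Ioo_le hab (A ∩ B)
  have h₄ := endpointCount_le_two (a := a) (b := b) ↑(A ∪ B)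
  rw [← coe_union, ← coe_inter] at h₂
  have h : n + 3 ≤ #(A ∪ B) ∨ 0 < #{x ∈ A ∩ B | x ∈ Set.Ioo a b} :=
    h.imp_right fun ⟨x, hx, hxI⟩ => card_pos.2 ⟨x, mem_filter.2 ⟨hx, hxI⟩⟩
  have hS : endpointCount a b ↑(A ∪ B) = 2 := by omega
  have hI : endpointCount a b ↑(A ∩ B) = 0 := by omega
  rw [endpointCount_eq_two_iff] at hS
  rw [endpointCount_eq_zero_iff] at hI
  exact ⟨hS.1, hS.2, hI.1, hI.2, by omega⟩

theorem neg_one_pow_mul_pos_of_two_mul_card_eq {ν : α → ℝ} (ha : a ∈ A ∪ B)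
    (ha' : a ∉ A ∩ B) (hb : b ∈ A ∪ B) (hb' : b ∉ A ∩ B)
    (hA : 2 * #A = n + 2 + endpointCount a b ↑A)
    (hpos : ∀ x ∈ A, x ∉ B → 0 < ν x) (hneg : ∀ x ∈ B, x ∉ A → ν x < 0) :
    0 < (-1) ^ n * (ν a * ν b) := by
  have hsign {x} (hx : x ∈ A ∪ B) (hx' : x ∉ A ∩ B) : (x ∈ A → 0 < ν x) ∧ (x ∉ A → ν x < 0) :=
    ⟨fun h => hpos x h fun h' => hx' (mem_inter.2 ⟨h, h'⟩),
      fun h => hneg x ((mem_union.1 hx).resolve_left h) h⟩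
  have hνa := hsign ha ha'
  have hνb := hsign hb hb'
  simp only [endpointCount, mem_coe] at hA
  by_cases haA : a ∈ A <;> by_cases hbA : b ∈ A <;> simp only [haA, hbA, if_true, if_false] at hA
  · rw [(Nat.even_iff.2 (by omega)).neg_one_pow]; nlinarith [hνa.1 haA, hνb.1 hbA]
  · rw [(Nat.odd_iff.2 (by omega)).neg_one_pow]; nlinarith [hνa.1 haA, hνb.2 hbA]
  · rw [(Nat.odd_iff.2 (by omega)).neg_one_pow]; nlinarith [hνa.2 haA, hνb.1 hbA]
  · rw [(Nat.even_iff.2 (by omega)).neg_one_pow]; nlinarith [hνa.2 haA, hνb.2 hbA]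

end Counting

theorem Finset.sum_orderEmbOfFin {α M : Type*} [LinearOrder α] [AddCommMonoid M] (S : Finset α)
    {m : ℕ} (h : #S = m) (f : α → M) : ∑ i, f (S.orderEmbOfFin h i) = ∑ x ∈ S, f x := by
  rw [← S.sum_coe_sort f, ← (S.orderIsoOfFin h).toEquiv.sum_comp]
  simp [coe_orderIsoOfFin_apply]

theorem Finset.orderEmbOfFin_zero_last_of_subset_Icc {α : Type*} [LinearOrder α] {a b : α}
    {S : Finset α} (hS : ↑S ⊆ Set.Icc a b) (ha : a ∈ S) (hb : b ∈ S) {m : ℕ} (h : #S = m + 1) :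
    S.orderEmbOfFin h 0 = a ∧ S.orderEmbOfFin h (Fin.last m) = b := by
  constructor
  · rw [show (0 : Fin (m + 1)) = ⟨0, m.succ_pos⟩ from rfl, orderEmbOfFin_zero h m.succ_pos]
    exact le_antisymm (min'_le S a ha) (hS (min'_mem _ _)).1
  · rw [show Fin.last m = ⟨m + 1 - 1, by omega⟩ from rfl, orderEmbOfFin_last h m.succ_pos]
    exact le_antisymm (hS (max'_mem _ _)).2 (le_max' S b hb)

namespace IsChebyshevOn

variable {n : ℕ} {u : Fin (n + 1) → ℝ → ℝ} {I : Set ℝ}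

theorem add_two_le_card (hu : IsChebyshevOn u I) (hI : I.Infinite) {S : Finset ℝ}
    (hS : ↑S ⊆ I) {ν : ℝ → ℝ} (hν : ∀ j, ∑ x ∈ S, ν x * u j x = 0) {x₀ : ℝ} (hx₀ : x₀ ∈ S)
    (hνx₀ : ν x₀ ≠ 0) : n + 2 ≤ #S := by
  by_contra! hcard
  -- pad `S` to `n + 1` points and extend `ν` by zero
  obtain ⟨T, hTI, hT⟩ := (hI.sdiff S.finite_toSet).exists_subset_card_eq (n + 1 - #S)
  have hdisj : Disjoint S T := Finset.disjoint_left.2 fun x hxS hxT => (hTI hxT).2 hxS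
  have hU : #(S ∪ T) = n + 1 := by rw [card_union_of_disjoint hdisj]; omega
  set e := (S ∪ T).orderEmbOfFin hU
  set ν' : ℝ → ℝ := fun x => if x ∈ S then ν x else 0
  have hzero := hu.eq_zero_of_sum_mul_eq_zero e.strictMono
    (fun i => by
      rcases Finset.mem_union.1 (orderEmbOfFin_mem _ hU i) with h | h
      exacts [hS h, (hTI h).1])
    (c := ν' ∘ e) fun j => ((S ∪ T).sum_orderEmbOfFin hU fun x => ν' x * u j x).trans (by
      simp only [ν', ite_mul, zero_mul]
      rw [sum_ite_mem, Finset.union_inter_cancel_left, hν j])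
  obtain ⟨i, hi⟩ : x₀ ∈ Set.range e := by
    rw [range_orderEmbOfFin]; exact Finset.mem_union_left _ hx₀
  exact hνx₀ (by simpa [ν', hi, hx₀] using congrFun hzero i)

theorem isSignAlternating_of_card_eq_add_two (hu : IsChebyshevOn u I) (hI : Convex ℝ I)
    (hcont : ∀ j, ContinuousOn (u j) I) {S : Finset ℝ} (hS : ↑S ⊆ I) {ν : ℝ → ℝ}
    (hν : ∀ j, ∑ x ∈ S, ν x * u j x = 0) {x₀ : ℝ} (hx₀ : x₀ ∈ S) (hνx₀ : ν x₀ ≠ 0) {m : ℕ}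
    (h : #S = m) (hm : m = n + 2) : IsSignAlternating (ν ∘ S.orderEmbOfFin h) := by
  subst hm
  refine hu.isSignAlternating_of_ne_zero hI hcont (S.orderEmbOfFin h).strictMono
    (fun i => hS (orderEmbOfFin_mem S h i))
    (fun j => (S.sum_orderEmbOfFin h fun x => ν x * u j x).trans (hν j)) fun h0 => ?_
  obtain ⟨i, rfl⟩ : x₀ ∈ Set.range (S.orderEmbOfFin h) := by rwa [range_orderEmbOfFin]
  exact hνx₀ (congrFun h0 i)

theorem isSignAlternating_of_card_eq_add_three {a b : ℝ} (hu : IsChebyshevOn u (Set.Icc a b))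
    (hcont : ∀ j, ContinuousOn (u j) (Set.Icc a b)) {S : Finset ℝ} (hS : ↑S ⊆ Set.Icc a b)
    (ha : a ∈ S) (hb : b ∈ S) {ν : ℝ → ℝ} (hν : ∀ j, ∑ x ∈ S, ν x * u j x = 0)
    (hends : 0 < (-1) ^ n * (ν a * ν b)) {m : ℕ} (h : #S = m) (hm : m = n + 3) :
    IsSignAlternating (ν ∘ S.orderEmbOfFin h) := by
  subst hm
  obtain ⟨h0, hlast⟩ := orderEmbOfFin_zero_last_of_subset_Icc hS ha hb h
  exact hu.isSignAlternating_of_ends (convex_Icc a b) hcont (S.orderEmbOfFin h).strictMono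
    (fun i => hS (orderEmbOfFin_mem S h i))
    (fun j => (S.sum_orderEmbOfFin h fun x => ν x * u j x).trans (hν j))
    (by simpa [h0, hlast] using hends)

theorem notMem_Ioo_and_isSignAlternating_of_index_le {a b : ℝ}
    (hu : IsChebyshevOn u (Set.Icc a b))
    (hcont : ∀ j, ContinuousOn (u j) (Set.Icc a b)) (hab : a < b) {A B : Finset ℝ}
    (hAB : ↑(A ∪ B) ⊆ Set.Icc a b) (hA : 2 * #A ≤ n + 2 + endpointCount a b ↑A)
    (hB : 2 * #B ≤ n + 2 + endpointCount a b ↑B) {ν : ℝ → ℝ}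
    (hν : ∀ j, ∑ x ∈ A ∪ B, ν x * u j x = 0) (hpos : ∀ x ∈ A, x ∉ B → 0 < ν x)
    (hneg : ∀ x ∈ B, x ∉ A → ν x < 0) (hne : A ≠ B) :
    (∀ x ∈ A ∩ B, x ∉ Set.Ioo a b) ∧
      ∀ {m : ℕ} (h : #(A ∪ B) = m), IsSignAlternating (ν ∘ (A ∪ B).orderEmbOfFin h) := by
  obtain ⟨x₀, hx₀, hνx₀⟩ : ∃ x ∈ A ∪ B, ν x ≠ 0 := by
    obtain ⟨x, hx⟩ := not_forall.1 (mt Finset.ext_iff.2 hne)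
    by_cases hxA : x ∈ A
    · exact ⟨x, mem_union_left _ hxA, (hpos x hxA fun hxB => hx (iff_of_true hxA hxB)).ne'⟩
    · have hxB : x ∈ B := by_contra fun hxB => hx (iff_of_false hxA hxB)
      exact ⟨x, mem_union_right _ hxB, (hneg x hxB hxA).ne⟩
  have hm := hu.add_two_le_card (Set.Icc_infinite hab) hAB hν hx₀ hνx₀
  have hle := card_union_add_card_filter_Ioo_le hab.ne hA hB
  have hends (h : n + 3 ≤ #(A ∪ B) ∨ ∃ x ∈ A ∩ B, x ∈ Set.Ioo a b) :
      a ∈ A ∪ B ∧ b ∈ A ∪ B ∧ 0 < (-1) ^ n * (ν a * ν b) := by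
    obtain ⟨ha, hb, ha', hb', hA'⟩ := endpoints_mem_and_two_mul_card_eq hab.ne hA hB hm h
    exact ⟨ha, hb, neg_one_pow_mul_pos_of_two_mul_card_eq ha ha' hb hb' hA' hpos hneg⟩
  have hint : ∀ x ∈ A ∩ B, x ∉ Set.Ioo a b := by
    intro x hx hxI
    have hS : #(A ∪ B) = n + 1 + 1 := by
      have : 0 < #{y ∈ A ∩ B | y ∈ Set.Ioo a b} := card_pos.2 ⟨x, mem_filter.2 ⟨hx, hxI⟩⟩
      omega
    -- the index count is tight, so the endpoint signs have the parity of `n + 3` alternating points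
    obtain ⟨ha, hb, hpar⟩ := hends (Or.inr ⟨x, hx, hxI⟩)
    have halt := (hu.isSignAlternating_of_card_eq_add_two (convex_Icc a b) hcont hAB hν hx₀
      hνx₀ hS rfl).mul_pos 0 (Fin.last _)
    obtain ⟨h0, hlast⟩ := orderEmbOfFin_zero_last_of_subset_Icc hAB ha hb hS
    simp only [Function.comp_apply, h0, hlast, Fin.val_zero, Fin.val_last, zero_add,
      pow_succ] at halt
    linarith
  refine ⟨hint, fun {m} h => ?_⟩
  rcases (by omega : m = n + 2 ∨ m = n + 3) with hm₂ | hm₃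
  · exact hu.isSignAlternating_of_card_eq_add_two (convex_Icc a b) hcont hAB hν hx₀ hνx₀ h hm₂
  · obtain ⟨ha, hb, hpar⟩ := hends (Or.inl (by omega))
    exact hu.isSignAlternating_of_card_eq_add_three hcont hAB ha hb hν hpar h hm₃

end IsChebyshevOn

theorem Finset.existsUnique_mem_Ioo_of_isSignAlternating {α : Type*} [LinearOrder α]
    {S : Finset α} {ν : α → ℝ} (h : IsSignAlternating (ν ∘ S.orderEmbOfFin rfl)) {x y : α}
    (hx : x ∈ S) (hy : y ∈ S) (hxy : x < y) (hνx : 0 < ν x) (hνy : 0 < ν y)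
    (hbetween : ∀ z ∈ S, z ∈ Set.Ioo x y → ν z < 0) : ∃! z, z ∈ S ∧ z ∈ Set.Ioo x y := by
  set e := S.orderEmbOfFin rfl
  have hrange (z) (hz : z ∈ S) : ∃ i, e i = z := by
    rwa [← Set.mem_range, range_orderEmbOfFin]
  obtain ⟨i, rfl⟩ := hrange x hx
  obtain ⟨j, rfl⟩ := hrange y hy
  obtain ⟨k, hk, hkuniq⟩ := h.existsUnique_between (e.lt_iff_lt.1 hxy) hνx hνy
    fun k hik hkj => hbetween _ (orderEmbOfFin_mem _ _ _) ⟨e.lt_iff_lt.2 hik, e.lt_iff_lt.2 hkj⟩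
  refine ⟨e k, ⟨orderEmbOfFin_mem _ _ _, e.lt_iff_lt.2 hk.1, e.lt_iff_lt.2 hk.2⟩, ?_⟩
  rintro z ⟨hz, hzx, hzy⟩
  obtain ⟨l, rfl⟩ := hrange z hz
  rw [hkuniq l ⟨e.lt_iff_lt.1 hzx, e.lt_iff_lt.1 hzy⟩]

theorem interlace_of_isSignAlternating {a b : ℝ} {p q : ℕ} {t' : Fin p → ℝ}
    {t'' : Fin q → ℝ} (ht' : StrictMono t') (ht'' : StrictMono t'') {S : Finset ℝ}
    (hS : S = univ.image t' ∪ univ.image t'') {ν : ℝ → ℝ}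
    (halt : IsSignAlternating (ν ∘ S.orderEmbOfFin rfl))
    (hpos : ∀ x ∈ univ.image t', x ∉ univ.image t'' → 0 < ν x)
    (hneg : ∀ x ∈ univ.image t'', x ∉ univ.image t' → ν x < 0)
    (hint : ∀ x ∈ univ.image t' ∩ univ.image t'', x ∉ Set.Ioo a b)
    (i : Fin p) (h : (i : ℕ) + 1 < p) (hi : t' i ∈ Set.Ioo a b)
    (hi' : t' ⟨(i : ℕ) + 1, h⟩ ∈ Set.Ioo a b) :
    ∃! k : Fin q, t'' k ∈ Set.Ioo (t' i) (t' ⟨(i : ℕ) + 1, h⟩) := by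
  set j : Fin p := ⟨i + 1, h⟩
  have hnotA (z) (hz : z ∈ Set.Ioo (t' i) (t' j)) : z ∉ univ.image t' := by
    rintro hzA
    obtain ⟨k, -, rfl⟩ := mem_image.1 hzA
    have := Fin.lt_def.1 (ht'.lt_iff_lt.1 hz.1)
    have := Fin.lt_def.1 (ht'.lt_iff_lt.1 hz.2)
    simp only [j] at this
    omega
  have hposA (k) (hk : t' k ∈ Set.Ioo a b) : 0 < ν (t' k) :=
    hpos _ (mem_image_of_mem _ (mem_univ k)) fun hB =>
      hint _ (mem_inter.2 ⟨mem_image_of_mem _ (mem_univ k), hB⟩) hk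
  have hmemS (x) (hx : x ∈ univ.image t') : x ∈ S := hS ▸ mem_union_left _ hx
  have hmemB (z) (hz : z ∈ S) (hzA : z ∉ univ.image t') : z ∈ univ.image t'' := by
    rw [hS] at hz
    exact (mem_union.1 hz).resolve_left hzA
  obtain ⟨z, ⟨hzS, hz⟩, hzuniq⟩ := existsUnique_mem_Ioo_of_isSignAlternating halt
    (hmemS _ (mem_image_of_mem _ (mem_univ i))) (hmemS _ (mem_image_of_mem _ (mem_univ j)))
    (ht' (Fin.lt_def.2 (by simp [j]))) (hposA i hi) (hposA j hi')
    fun z hzS hz => hneg z (hmemB z hzS (hnotA z hz)) (hnotA z hz)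
  obtain ⟨k, -, rfl⟩ := mem_image.1 (hmemB z hzS (hnotA z hz))
  exact ⟨k, hz, fun k' hk' => ht''.injective
    (hzuniq _ ⟨hS ▸ mem_union_right _ (mem_image_of_mem _ (mem_univ k')), hk'⟩)⟩

theorem Finset.sum_extend_mul {ι α : Type*} [Fintype ι] [DecidableEq α] {t : ι → α}
    (ht : Function.Injective t) (lam : ι → ℝ) {S : Finset α} (hS : univ.image t ⊆ S)
    (f : α → ℝ) : ∑ x ∈ S, Function.extend t lam 0 x * f x = ∑ i, lam i * f (t i) := by
  rw [← sum_subset hS fun x _ hx => ?_, sum_image fun i _ j _ hij => ht hij]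
  · simp [ht.extend_apply]
  · rw [Function.extend_apply' _ _ _ (by simpa using hx), Pi.zero_apply, zero_mul]

theorem extend_sub_extend_pos {ι κ α : Type*} [Fintype ι] [Fintype κ] [DecidableEq α]
    {t' : ι → α} {t'' : κ → α} (ht' : Function.Injective t') {lam' : ι → ℝ} (lam'' : κ → ℝ)
    (hlam' : ∀ i, 0 < lam' i) {x : α} (hx : x ∈ univ.image t') (hx' : x ∉ univ.image t'') :
    0 < Function.extend t' lam' 0 x - Function.extend t'' lam'' 0 x := by
  obtain ⟨k, -, rfl⟩ := mem_image.1 hx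
  rw [ht'.extend_apply, Function.extend_apply' _ _ _ (by simpa using hx'), Pi.zero_apply,
    sub_zero]
  exact hlam' k

open Classical in
theorem two_mul_card_image_le {a b : ℝ} {n p : ℕ} {t : Fin p → ℝ} (ht : Function.Injective t)
    (h : 2 * p ≤ n + 2 + (if a ∈ Set.range t then 1 else 0) + (if b ∈ Set.range t then 1 else 0)) :
    2 * #(univ.image t) ≤ n + 2 + endpointCount a b ↑(univ.image t) := by
  rw [card_image_of_injective _ ht, card_univ, Fintype.card_fin, coe_image, coe_univ,
    Set.image_univ, endpointCount]
  split_ifs at h ⊢ <;> omega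

open Classical in
theorem canonical_representations_interlace_general
    (n : ℕ) (a b : ℝ) (hab : a < b) (u : Fin (n + 1) → ℝ → ℝ)
    (hcont : ∀ j, ContinuousOn (u j) (Set.Icc a b))
    (hcheb : ∀ c : Fin (n + 1) → ℝ, c ≠ 0 →
      ∀ t : Fin (n + 1) → ℝ, StrictMono t → (∀ i, t i ∈ Set.Icc a b) →
        ¬ (∀ i, ∑ j, c j * u j (t i) = 0))
    (c : Fin (n + 1) → ℝ)
    (p q : ℕ)
    (t' : Fin p → ℝ) (lam' : Fin p → ℝ)
    (t'' : Fin q → ℝ) (lam'' : Fin q → ℝ)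
    (ht' : StrictMono t') (ht'ab : ∀ i, t' i ∈ Set.Icc a b)
    (ht'' : StrictMono t'') (ht''ab : ∀ i, t'' i ∈ Set.Icc a b)
    (hlam' : ∀ i, 0 < lam' i) (hlam'' : ∀ i, 0 < lam'' i)
    (hrep' : ∀ j, c j = ∑ i, lam' i * u j (t' i))
    (hrep'' : ∀ j, c j = ∑ i, lam'' i * u j (t'' i))
    -- index of each representation is at most (n+2)/2, endpoints counting 1/2:
    (hidx' : 2 * p ≤ n + 2 + (if a ∈ Set.range t' then 1 else 0)
        + (if b ∈ Set.range t' then 1 else 0))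
    (hidx'' : 2 * q ≤ n + 2 + (if a ∈ Set.range t'' then 1 else 0)
        + (if b ∈ Set.range t'' then 1 else 0))
    (hne : Set.range t' ≠ Set.range t'') :
    (∀ i : Fin p, ∀ h : (i : ℕ) + 1 < p,
      t' i ∈ Set.Ioo a b → t' ⟨(i : ℕ) + 1, h⟩ ∈ Set.Ioo a b →
        ∃! k : Fin q, t'' k ∈ Set.Ioo (t' i) (t' ⟨(i : ℕ) + 1, h⟩)) ∧
    (∀ i : Fin q, ∀ h : (i : ℕ) + 1 < q,
      t'' i ∈ Set.Ioo a b → t'' ⟨(i : ℕ) + 1, h⟩ ∈ Set.Ioo a b →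
        ∃! k : Fin p, t' k ∈ Set.Ioo (t'' i) (t'' ⟨(i : ℕ) + 1, h⟩)) := by
  set A := univ.image t'
  set B := univ.image t''
  set ν := Function.extend t' lam' 0 - Function.extend t'' lam'' 0
  have hν (j) : ∑ x ∈ A ∪ B, ν x * u j x = 0 := by
    simp only [ν, Pi.sub_apply, sub_mul, sum_sub_distrib]
    rw [sum_extend_mul ht'.injective lam' subset_union_left,
      sum_extend_mul ht''.injective lam'' subset_union_right, ← hrep', ← hrep'', sub_self]
  have hpos : ∀ x ∈ A, x ∉ B → 0 < ν x := fun x hx hxB =>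
    extend_sub_extend_pos ht'.injective lam'' hlam' hx hxB
  have hneg : ∀ x ∈ B, x ∉ A → ν x < 0 := fun x hx hxA => by
    simpa [ν] using extend_sub_extend_pos ht''.injective lam' hlam'' hx hxA
  have hAB : ↑(A ∪ B) ⊆ Set.Icc a b := by
    simp [A, B, Set.union_subset_iff, Set.range_subset_iff, ht'ab, ht''ab]
  obtain ⟨hint, halt⟩ := IsChebyshevOn.notMem_Ioo_and_isSignAlternating_of_index_le (u := u)
    hcheb hcont hab hAB
    (two_mul_card_image_le ht'.injective hidx')
    (two_mul_card_image_le ht''.injective hidx'') hν hpos hneg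
    (fun h => hne (by simpa [A, B] using congrArg ((↑) : Finset ℝ → Set ℝ) h))
  exact ⟨interlace_of_isSignAlternating ht' ht'' rfl (halt rfl) hpos hneg hint,
    interlace_of_isSignAlternating ht'' ht' (union_comm _ _) (ν := -ν) (halt rfl).neg
      (fun x hx hxA => neg_pos.2 (hneg x hx hxA)) (fun x hx hxB => neg_lt_zero.2 (hpos x hx hxB))
      (by rwa [inter_comm])⟩

open Classical in
/-- Interlacing of canonical representations: if two distinct positive-weight
representations of the same moment vector over a Chebyshev set both have index
at most `(n+2)/2` (an endpoint of `[a,b]` counting one half), then their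
interior points strictly interlace: between two consecutive interior points of
one representation lies exactly one point of the other. -/
theorem canonical_representations_interlace
    (n : ℕ) (a b : ℝ) (hab : a < b) (u : Fin (n + 1) → ℝ → ℝ)
    (hcont : ∀ j, ContinuousOn (u j) (Set.Icc a b))
    (hcheb : ∀ c : Fin (n + 1) → ℝ, c ≠ 0 →
      ∀ t : Fin (n + 1) → ℝ, StrictMono t → (∀ i, t i ∈ Set.Icc a b) →
        ¬ (∀ i, ∑ j, c j * u j (t i) = 0))
    (c : Fin (n + 1) → ℝ)
    (p q : ℕ) (hp : 0 < p) (hq : 0 < q)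
    (t' : Fin p → ℝ) (lam' : Fin p → ℝ)
    (t'' : Fin q → ℝ) (lam'' : Fin q → ℝ)
    (ht' : StrictMono t') (ht'ab : ∀ i, t' i ∈ Set.Icc a b)
    (ht'' : StrictMono t'') (ht''ab : ∀ i, t'' i ∈ Set.Icc a b)
    (hlam' : ∀ i, 0 < lam' i) (hlam'' : ∀ i, 0 < lam'' i)
    (hrep' : ∀ j, c j = ∑ i, lam' i * u j (t' i))
    (hrep'' : ∀ j, c j = ∑ i, lam'' i * u j (t'' i))
    -- index of each representation is at most (n+2)/2, endpoints counting 1/2: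
    (hidx' : 2 * p ≤ n + 2 + (if a ∈ Set.range t' then 1 else 0)
        + (if b ∈ Set.range t' then 1 else 0))
    (hidx'' : 2 * q ≤ n + 2 + (if a ∈ Set.range t'' then 1 else 0)
        + (if b ∈ Set.range t'' then 1 else 0))
    (hne : Set.range t' ≠ Set.range t'') :
    (∀ i : Fin p, ∀ h : (i : ℕ) + 1 < p,
      t' i ∈ Set.Ioo a b → t' ⟨(i : ℕ) + 1, h⟩ ∈ Set.Ioo a b →
        ∃! k : Fin q, t'' k ∈ Set.Ioo (t' i) (t' ⟨(i : ℕ) + 1, h⟩)) ∧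
    (∀ i : Fin q, ∀ h : (i : ℕ) + 1 < q,
      t'' i ∈ Set.Ioo a b → t'' ⟨(i : ℕ) + 1, h⟩ ∈ Set.Ioo a b →
        ∃! k : Fin p, t' k ∈ Set.Ioo (t'' i) (t'' ⟨(i : ℕ) + 1, h⟩)) :=
  canonical_representations_interlace_general n a b hab u hcont hcheb c p q t' lam' t'' lam'' ht'
    ht'ab ht'' ht''ab hlam' hlam'' hrep' hrep'' hidx' hidx'' hne
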